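/- arXiv:1812.07264 — 10 statements merged into one kernel-verified Lean document; each statement's English description precedes it below -/
import Mathlib

section
/- For the 'always on 1st' TTL policy with threshold T = R, and any request sequence, the total delivery cost is at most 2 times the optimal offline cost R + \sum_{i=2}^N min(a_i, R). Moreover, T = R minimizes the worst-case competitive ratio among all choices of T, and the bound 2 is tight. -/
/-- Cost of the `always on 1st` TTL policy with threshold `T` on the sequence
with inter-request times `a 2, ..., a N`. -/
noncomputable def costAlways1 (R T : ℝ) (N : ℕ) (a : ℕ → ℝ) : ℝ :=
  R + T + ∑ i ∈ Finset.Icc 2 N, (if T < a i then T + R else a i)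

/-- Optimal offline cost. -/
noncomputable def costOpt (R : ℝ) (N : ℕ) (a : ℕ → ℝ) : ℝ :=
  R + ∑ i ∈ Finset.Icc 2 N, min (a i) R

/-- With `T = R` the `always on 1st` cost is at most twice the
optimal offline cost on every request sequence; moreover for every choice of
`T > 0` the worst-case ratio is at least `2` (so `T = R` minimizes the
worst-case competitive ratio and the bound `2` is tight). -/
theorem always_on_first_competitive (R : ℝ) (hR : 0 < R) :
    (∀ (N : ℕ) (a : ℕ → ℝ), (∀ i ∈ Finset.Icc 2 N, 0 < a i) →
      costAlways1 R R N a ≤ 2 * costOpt R N a) ∧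
    (∀ T, 0 < T → ∀ ε, 0 < ε → ∃ (N : ℕ) (a : ℕ → ℝ),
      (∀ i ∈ Finset.Icc 2 N, 0 < a i) ∧
      (2 - ε) * costOpt R N a ≤ costAlways1 R T N a) := by
  constructor
  · intro N a ha
    unfold costAlways1 costOpt
    rw [mul_add, Finset.mul_sum]
    have hterm : ∀ i ∈ Finset.Icc 2 N,
        (if R < a i then R + R else a i) ≤ 2 * min (a i) R := by
      intro i hi
      have h := ha i hi
      split_ifs with h'
      · rw [min_eq_right h'.le]; linarith
      · rw [min_eq_left (not_lt.mp h')]; linarith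
    have hsum := Finset.sum_le_sum hterm
    linarith
  · intro T hT ε hε
    set ε' := min ε 1 with hε'def
    have hε'0 : 0 < ε' := lt_min hε one_pos
    have hε'1 : ε' ≤ 1 := min_le_right _ _
    have hε'ε : ε' ≤ ε := min_le_left _ _
    set m0 := min T R with hm0def
    have hm00 : 0 < m0 := lt_min hT hR
    have hm0T : m0 ≤ T := min_le_left _ _
    have hm0R : m0 ≤ R := min_le_right _ _
    set δ := ε' * m0 / 4 with hδdef
    have hδ0 : 0 < δ := by positivity
    set K := ⌈R / δ⌉₊ + 1 with hKdef
    have hK1 : 1 ≤ K := Nat.le_add_left 1 _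
    have hKδ : R ≤ (K : ℝ) * δ := by
      have h1 : R / δ ≤ (⌈R / δ⌉₊ : ℝ) := Nat.le_ceil _
      have h2 : (⌈R / δ⌉₊ : ℝ) ≤ (K : ℝ) := by
        have : (⌈R / δ⌉₊ : ℕ) ≤ K := by omega
        exact_mod_cast this
      have := (div_le_iff₀ hδ0).mp (le_trans h1 h2)
      linarith
    refine ⟨K + 1, fun _ => T + δ, fun i _ => show (0:ℝ) < T + δ by linarith, ?_⟩
    unfold costAlways1 costOpt
    have hif : ∀ i ∈ Finset.Icc 2 (K + 1),
        (if T < T + δ then T + R else T + δ) = T + R := fun i _ => if_pos (by linarith)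
    rw [Finset.sum_congr rfl hif, Finset.sum_const, Finset.sum_const]
    have hcard : (Finset.Icc 2 (K + 1)).card = K - 1 + 1 := by
      rw [Nat.card_Icc]; omega
    rw [hcard, nsmul_eq_mul, nsmul_eq_mul]
    have hKcast : ((K - 1 + 1 : ℕ) : ℝ) = (K : ℝ) := by
      have : K - 1 + 1 = K := by omega
      rw [this]
    rw [hKcast]
    set m := min (T + δ) R with hmdef
    have hm0' : 0 < m := lt_min (by linarith) hR
    have hmle : m ≤ m0 + δ := by
      have : min (T + δ) R ≤ min (T + δ) (R + δ) :=
        min_le_min le_rfl (by linarith)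
      rw [min_add_add_right] at this
      exact this
    have hkey : (2 - ε') * (m0 + δ) ≤ T + R - δ := by
      have h1 : 0 ≤ ε' * m0 := by positivity
      have h2 : 0 ≤ ε' * δ := by positivity
      have h3 : 2 * m0 ≤ T + R := by linarith
      nlinarith [hδdef]
    have hK0 : (0 : ℝ) ≤ K := Nat.cast_nonneg _
    have hstep : (K : ℝ) * ((2 - ε') * m) ≤ (K : ℝ) * (T + R - δ) := by
      apply mul_le_mul_of_nonneg_left _ hK0
      calc (2 - ε') * m ≤ (2 - ε') * (m0 + δ) := by
            apply mul_le_mul_of_nonneg_left hmle; linarith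
        _ ≤ T + R - δ := hkey
    have hmono : (2 - ε) * (R + (K : ℝ) * m) ≤ (2 - ε') * (R + (K : ℝ) * m) := by
      apply mul_le_mul_of_nonneg_right (by linarith)
      have : 0 ≤ (K : ℝ) * m := by positivity
      linarith
    have hεR : (2 - ε') * R ≤ 2 * R := by nlinarith
    nlinarith [hstep, hmono, hεR, hKδ]
end

section
/- For the 'always on M-th request' TTL policy with T = R, the total delivery cost on any request sequence is at most (M+1) times the optimal offline cost, T = R minimizes the worst-case competitive ratio over all T, and the ratio M+1 is attained in the limit by request sequences consisting of batches of M near-simultaneous requests separated by more than max(T, R). -/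
/-- One step of the `always on M-th request` TTL policy.  The state is
`(counter, cached, accumulated cost)`; `g` is the time gap since the
previous request.  A cached object refreshed within `T` incurs storage cost `g`;
if the gap exceeds `T` the object was evicted after `T` time units (storage
cost `T`), the counter is reset and the request is a miss (cost `R`), setting
the counter to `1` (cached again iff `M ≤ 1`).  A request to the uncached
object costs `R` and increments the counter; the object is cached once the
counter reaches `M`. -/
noncomputable def alwaysStep (R T : ℝ) (M : ℕ) : ℕ × Bool × ℝ → ℝ → ℕ × Bool × ℝ :=
  fun s g =>
    if s.2.1 then
      if g ≤ T then (s.1, true, s.2.2 + g)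
      else (1, decide (M ≤ 1), s.2.2 + T + R)
    else
      (s.1 + 1, decide (M ≤ s.1 + 1), s.2.2 + R)

/-- Total cost of the `always on M-th` policy on the list of inter-request gaps
(the first request is a miss costing `R`; a final storage cost `T` is paid if
the object is cached after the last request). -/
noncomputable def alwaysCost (R T : ℝ) (M : ℕ) (gaps : List ℝ) : ℝ :=
  let s := gaps.foldl (alwaysStep R T M) (1, decide (M ≤ 1), R)
  s.2.2 + (if s.2.1 then T else 0)

/-- Optimal offline cost `R + ∑ min (gap, R)`. -/
noncomputable def optCost (R : ℝ) (gaps : List ℝ) : ℝ :=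
  R + (gaps.map (fun g => min g R)).sum

/-! With `T = R`, amortise against `potential`, the cost the current caching cycle may still
incur. Between consecutive requests the policy's cost plus potential grows by at most
`(M + 1) * min g R`: a hit after a gap `g ≤ R` costs `g`, an eviction after a gap `g > R` costs
`2R` and starts a cycle of potential at most `M * R`, and a miss only turns potential into cost.
Summing over the gaps gives the upper bound.

For any `T`, batches of `M` requests `δ` apart, separated by gaps just above `T`, make the
policy pay `M * R + T ≥ (M + 1) * min T R` per batch, while the optimum pays about `min T R`
per batch. -/

namespace AlwaysOnMth

def ValidState (M : ℕ) (s : ℕ × Bool × ℝ) : Prop :=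
  s.2.1 = false → s.1 < M

theorem validState_alwaysStep (R T : ℝ) (M : ℕ) (s : ℕ × Bool × ℝ) (g : ℝ) :
    ValidState M (alwaysStep R T M s g) := by
  obtain ⟨c, _ | _, A⟩ := s <;> unfold ValidState alwaysStep <;> split_ifs <;> simp

theorem validState_foldl (R T : ℝ) (M : ℕ) (gaps : List ℝ) {s : ℕ × Bool × ℝ}
    (hs : ValidState M s) : ValidState M (gaps.foldl (alwaysStep R T M) s) := by
  induction gaps generalizing s with
  | nil => exact hs
  | cons g gaps ih => exact ih (validState_alwaysStep R T M s g)

/-- What the current caching cycle may still cost with `T = R`: the `M - c` misses before the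
object is cached, plus storage `R` up to its eviction. -/
noncomputable def potential (R : ℝ) (M : ℕ) (s : ℕ × Bool × ℝ) : ℝ :=
  if s.2.1 then R else (M + 1 - s.1) * R

theorem potential_reset_le {R : ℝ} (hR : 0 ≤ R) {M : ℕ} (hM : 1 ≤ M) (A : ℝ) :
    potential R M (1, decide (M ≤ 1), A) ≤ M * R := by
  have hM' : (1 : ℝ) ≤ M := by exact_mod_cast hM
  unfold potential
  split_ifs <;> push_cast <;> nlinarith

theorem amortized_alwaysStep {R : ℝ} (hR : 0 ≤ R) {M : ℕ} (hM : 1 ≤ M) {s : ℕ × Bool × ℝ}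
    (hs : ValidState M s) {g : ℝ} (hg : 0 ≤ g) :
    (alwaysStep R R M s g).2.2 + potential R M (alwaysStep R R M s g) ≤
      s.2.2 + potential R M s + (M + 1) * min g R := by
  have hmin : 0 ≤ min g R := le_min hg hR
  obtain ⟨c, _ | _, A⟩ := s
  · have hc : c + 1 ≤ M := hs rfl
    simp only [alwaysStep, potential, Bool.false_eq_true, if_false, decide_eq_true_eq]
    split_ifs with hcM
    · have : (c : ℝ) + 1 = M := by exact_mod_cast le_antisymm hc hcM
      nlinarith
    · push_cast
      nlinarith
  · by_cases hgR : g ≤ R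
    · simp only [alwaysStep, potential, if_true, hgR, min_eq_left hgR]
      nlinarith
    · have hevict := potential_reset_le hR hM (A + R + R)
      have hcached : potential R M (c, true, A) = R := if_pos rfl
      simp only [alwaysStep, if_true, hgR, if_false, min_eq_right (le_of_not_ge hgR), hcached]
      linarith

theorem amortized_foldl {R : ℝ} (hR : 0 ≤ R) {M : ℕ} (hM : 1 ≤ M) (gaps : List ℝ)
    (hgaps : ∀ g ∈ gaps, 0 ≤ g) {s : ℕ × Bool × ℝ} (hs : ValidState M s) :
    (gaps.foldl (alwaysStep R R M) s).2.2 + potential R M (gaps.foldl (alwaysStep R R M) s) ≤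
      s.2.2 + potential R M s + (M + 1) * (gaps.map (fun g => min g R)).sum := by
  induction gaps generalizing s with
  | nil => simp
  | cons g gaps ih =>
    have hg := hgaps g List.mem_cons_self
    have h := ih (fun x hx => hgaps x (List.mem_cons_of_mem g hx))
      (validState_alwaysStep R R M s g)
    have := amortized_alwaysStep hR hM hs hg
    simp only [List.foldl_cons, List.map_cons, List.sum_cons]
    linarith

theorem ite_le_potential {R : ℝ} (hR : 0 ≤ R) {M : ℕ} {s : ℕ × Bool × ℝ}
    (hs : ValidState M s) : (if s.2.1 then R else 0) ≤ potential R M s := by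
  unfold potential
  split_ifs with hb
  · exact le_rfl
  · have : (s.1 : ℝ) + 1 ≤ M := by exact_mod_cast hs (by simpa using hb)
    nlinarith

theorem alwaysCost_le_mul_optCost {R : ℝ} (hR : 0 ≤ R) {M : ℕ} (hM : 1 ≤ M) (gaps : List ℝ)
    (hgaps : ∀ g ∈ gaps, 0 ≤ g) : alwaysCost R R M gaps ≤ (M + 1) * optCost R gaps := by
  have hinit : ValidState M (1, decide (M ≤ 1), R) := fun h => by simpa using h
  have hpot := potential_reset_le hR hM R
  have hfold := amortized_foldl hR hM gaps hgaps hinit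
  have hlast := ite_le_potential hR (validState_foldl R R M gaps hinit)
  simp only [alwaysCost, optCost]
  linarith

theorem foldl_replicate_of_uncached (R T δ : ℝ) {M c k : ℕ} (h : c + k = M) (A : ℝ) :
    (List.replicate k δ).foldl (alwaysStep R T M) (c, decide (M ≤ c), A) =
      (M, true, A + k * R) := by
  induction k generalizing c A with
  | zero => simp [← h]
  | succ k ih =>
    have hc : ¬ M ≤ c := by omega
    rw [List.replicate_succ, List.foldl_cons, decide_eq_false hc]
    simp only [alwaysStep, Bool.false_eq_true, if_false]
    rw [ih (by omega)]
    push_cast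
    ring_nf

theorem alwaysStep_evict {R T G : ℝ} (hG : T < G) (M c : ℕ) (A : ℝ) :
    alwaysStep R T M (c, true, A) G = (1, decide (M ≤ 1), A + T + R) := by
  simp [alwaysStep, not_le.mpr hG]

def batchGaps (δ G : ℝ) (M : ℕ) : ℕ → List ℝ
  | 0 => List.replicate (M - 1) δ
  | n + 1 => batchGaps δ G M n ++ G :: List.replicate (M - 1) δ

theorem eq_or_eq_of_mem_batchGaps {δ G g : ℝ} {M : ℕ} {n : ℕ} (h : g ∈ batchGaps δ G M n) :
    g = δ ∨ g = G := by
  induction n with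
  | zero => exact .inl (List.eq_of_mem_replicate h)
  | succ n ih =>
    simp only [batchGaps, List.mem_append, List.mem_cons] at h
    rcases h with h | h | h
    · exact ih h
    · exact .inr h
    · exact .inl (List.eq_of_mem_replicate h)

theorem sum_map_batchGaps (f : ℝ → ℝ) (δ G : ℝ) (M n : ℕ) :
    ((batchGaps δ G M n).map f).sum = (n + 1) * (M - 1 : ℕ) * f δ + n * f G := by
  induction n with
  | zero => simp [batchGaps]
  | succ n ih =>
    simp only [batchGaps, List.map_append, List.sum_append, ih, List.map_cons, List.sum_cons,
      List.map_replicate, List.sum_replicate, nsmul_eq_mul]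
    push_cast
    ring

theorem alwaysCost_batchGaps (R : ℝ) {T G : ℝ} (hG : T < G) (δ : ℝ) {M : ℕ} (hM : 1 ≤ M)
    (n : ℕ) : alwaysCost R T M (batchGaps δ G M n) = (n + 1) * (M * R + T) := by
  have hbatch : ∀ A : ℝ, (List.replicate (M - 1) δ).foldl (alwaysStep R T M)
      (1, decide (M ≤ 1), A) = (M, true, A + (M - 1) * R) := fun A => by
    rw [foldl_replicate_of_uncached R T δ (by omega) A, Nat.cast_sub hM, Nat.cast_one]
  have hfold : ∀ n, (batchGaps δ G M n).foldl (alwaysStep R T M) (1, decide (M ≤ 1), R) =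
      (M, true, (n + 1) * (M * R + T) - T) := fun n => by
    induction n with
    | zero => rw [batchGaps, hbatch]; ring_nf
    | succ n ih =>
      rw [batchGaps, List.foldl_append, ih, List.foldl_cons, alwaysStep_evict hG, hbatch]
      push_cast
      ring_nf
  simp only [alwaysCost, hfold, if_true]
  ring

theorem optCost_nonneg {R : ℝ} (hR : 0 ≤ R) {gaps : List ℝ} (hgaps : ∀ g ∈ gaps, 0 ≤ g) :
    0 ≤ optCost R gaps :=
  add_nonneg hR <| List.sum_nonneg fun x hx => by
    obtain ⟨g, hg, rfl⟩ := List.mem_map.mp hx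
    exact le_min (hgaps g hg) hR

theorem exists_gaps_mul_optCost_le_alwaysCost {R : ℝ} (hR : 0 < R) {M : ℕ} (hM : 1 ≤ M)
    {T : ℝ} (hT : 0 < T) {ε : ℝ} (hε : 0 < ε) :
    ∃ gaps : List ℝ, (∀ g ∈ gaps, 0 < g) ∧
      ((M : ℝ) + 1 - ε) * optCost R gaps ≤ alwaysCost R T M gaps := by
  have hM' : (1 : ℝ) ≤ M := by exact_mod_cast hM
  set K : ℝ := M + 1
  set m := min T R
  have hm : 0 < m := lt_min hT hR
  set δ := ε * m / (2 * K * M)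
  have hδ : 0 < δ := by positivity
  have hK : 0 < K := by positivity
  have hKMδ : K * M * δ = ε * m / 2 := by
    simp only [δ]
    field_simp
  obtain ⟨n, hn⟩ := exists_nat_ge (2 * K * R / (ε * m))
  set N : ℝ := n + 1
  have hKR : K * R ≤ N * (ε * m / 2) := by
    rw [div_le_iff₀ (by positivity)] at hn
    nlinarith
  set gaps := batchGaps δ (T + δ) M n
  have hgaps : ∀ g ∈ gaps, 0 < g := fun g hg => by
    rcases eq_or_eq_of_mem_batchGaps hg with rfl | rfl <;> linarith
  have hcost : K * N * m ≤ alwaysCost R T M gaps := by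
    have hKm : K * m ≤ M * R + T := by
      nlinarith [mul_le_mul_of_nonneg_left (min_le_right T R) (by positivity : (0 : ℝ) ≤ M),
        min_le_left T R]
    calc K * N * m = N * (K * m) := by ring
      _ ≤ N * (M * R + T) := mul_le_mul_of_nonneg_left hKm (by positivity)
      _ = alwaysCost R T M gaps := (alwaysCost_batchGaps R (by linarith) δ hM n).symm
  have hopt : optCost R gaps ≤ R + N * (m + M * δ) := by
    have hδR : min δ R ≤ δ := min_le_left δ R
    have hGR : min (T + δ) R ≤ m + δ := by
      rw [← min_add_add_right]
      exact min_le_min_left _ (by linarith)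
    have hG0 : 0 ≤ min (T + δ) R := le_min (by linarith) hR.le
    have hn : (n : ℝ) ≤ N := by linarith
    simp only [optCost, gaps, sum_map_batchGaps, Nat.cast_sub hM, Nat.cast_one]
    nlinarith [mul_le_mul hn hGR hG0 (by positivity : (0 : ℝ) ≤ N),
      mul_le_mul_of_nonneg_left hδR (by nlinarith : (0 : ℝ) ≤ N * (M - 1))]
  refine ⟨gaps, hgaps, ?_⟩
  rcases le_or_gt ε K with hεK | hεK
  · calc (K - ε) * optCost R gaps ≤ (K - ε) * (R + N * (m + M * δ)) :=
          mul_le_mul_of_nonneg_left hopt (by linarith)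
      _ ≤ K * N * m := by
        nlinarith [mul_pos hε hR, mul_pos (mul_pos hε hδ) (by positivity : 0 < N * M)]
      _ ≤ alwaysCost R T M gaps := hcost
  · calc (K - ε) * optCost R gaps ≤ 0 :=
          mul_nonpos_of_nonpos_of_nonneg (by linarith)
            (optCost_nonneg hR.le fun g hg => (hgaps g hg).le)
      _ ≤ K * N * m := by positivity
      _ ≤ alwaysCost R T M gaps := hcost

end AlwaysOnMth

/-- With `T = R`, the `always on M-th` cost is at most `M + 1`
times the optimal offline cost on every request sequence; and for every
`T > 0` the worst-case ratio is at least `M + 1` (attained in the limit by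
batches of `M` near-simultaneous requests separated by more than `max T R`),
so `T = R` minimizes the worst-case competitive ratio and `M + 1` is tight. -/
theorem always_on_Mth_competitive (R : ℝ) (hR : 0 < R) (M : ℕ) (hM : 1 ≤ M) :
    (∀ gaps : List ℝ, (∀ g ∈ gaps, 0 < g) →
      alwaysCost R R M gaps ≤ (M + 1) * optCost R gaps) ∧
    (∀ T, 0 < T → ∀ ε, 0 < ε → ∃ gaps : List ℝ,
      (∀ g ∈ gaps, 0 < g) ∧
      ((M : ℝ) + 1 - ε) * optCost R gaps ≤ alwaysCost R T M gaps) :=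
  ⟨fun gaps hgaps =>
    AlwaysOnMth.alwaysCost_le_mul_optCost hR.le hM gaps fun g hg => (hgaps g hg).le,
    fun _ hT _ hε => AlwaysOnMth.exists_gaps_mul_optCost_le_alwaysCost hR hM hT hε⟩
end

section
/- For the 'single-window on M-th request' policy with T = R, the total delivery cost on any request sequence is at most (M+1) times the optimal offline cost R + \sum_{i=2}^N min(a_i, R), and this bound is tight. -/
/-- One step of the `single-window on M-th request` TTL policy.  State:
`(counter, cached, accumulated cost)`; `g` is the gap since the previous
request.  For an uncached object, the counter is incremented if the gap is at
most `T` and reset to `1` otherwise; the object is cached once the counter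
reaches `M`; each such request is a miss costing `R`.  A cached object
refreshed within `T` costs `g` of storage; otherwise it was evicted after `T`
time units (storage cost `T`), and the new request restarts the counter at `1`. -/
noncomputable def windowStep (R T : ℝ) (M : ℕ) : ℕ × Bool × ℝ → ℝ → ℕ × Bool × ℝ :=
  fun s g =>
    if s.2.1 then
      if g ≤ T then (s.1, true, s.2.2 + g)
      else (1, decide (M ≤ 1), s.2.2 + T + R)
    else
      if g ≤ T then (s.1 + 1, decide (M ≤ s.1 + 1), s.2.2 + R)
      else (1, decide (M ≤ 1), s.2.2 + R)

/-- Total cost of the `single-window on M-th` policy on the list of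
inter-request gaps. -/
noncomputable def windowCost (R T : ℝ) (M : ℕ) (gaps : List ℝ) : ℝ :=
  let s := gaps.foldl (windowStep R T M) (1, decide (M ≤ 1), R)
  s.2.2 + (if s.2.1 then T else 0)

lemma windowStep_true (R T : ℝ) (M : ℕ) (c : ℕ) (x g : ℝ) :
    windowStep R T M (c, true, x) g =
      if g ≤ T then (c, true, x + g) else (1, decide (M ≤ 1), x + T + R) := by
  simp [windowStep]

lemma windowStep_false (R T : ℝ) (M : ℕ) (c : ℕ) (x g : ℝ) :
    windowStep R T M (c, false, x) g =
      if g ≤ T then (c + 1, decide (M ≤ c + 1), x + R)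
      else (1, decide (M ≤ 1), x + R) := by
  simp [windowStep]

lemma window_inv (R : ℝ) (hR : 0 < R) (M : ℕ) (hM : 1 ≤ M) :
    ∀ (gaps : List ℝ), (∀ g ∈ gaps, 0 < g) → ∀ (s : ℕ × Bool × ℝ) (o : ℝ),
      (s.2.1 = true → s.2.2 + R ≤ (M + 1) * o) →
      (s.2.1 = false → 1 ≤ s.1 ∧ s.1 < M ∧
          s.2.2 + ((M : ℝ) - s.1 + 1) * R ≤ (M + 1) * o) →
      ((gaps.foldl (windowStep R R M) s).2.1 = true →
        (gaps.foldl (windowStep R R M) s).2.2 + R ≤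
          (M + 1) * (o + (gaps.map (fun g => min g R)).sum)) ∧
      ((gaps.foldl (windowStep R R M) s).2.1 = false →
        1 ≤ (gaps.foldl (windowStep R R M) s).1 ∧
        (gaps.foldl (windowStep R R M) s).1 < M ∧
        (gaps.foldl (windowStep R R M) s).2.2 +
          ((M : ℝ) - (gaps.foldl (windowStep R R M) s).1 + 1) * R ≤
          (M + 1) * (o + (gaps.map (fun g => min g R)).sum)) := by
  intro gaps
  induction gaps with
  | nil =>
    intro _ s o h1 h2
    simpa using ⟨h1, h2⟩
  | cons g gs ih =>
    intro hpos s o h1 h2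
    have hg : 0 < g := hpos g (by simp)
    have hgs : ∀ g ∈ gs, 0 < g := fun x hx => hpos x (by simp [hx])
    simp only [List.foldl_cons, List.map_cons, List.sum_cons]
    have key : ((windowStep R R M s g).2.1 = true →
          (windowStep R R M s g).2.2 + R ≤ (M + 1) * (o + min g R)) ∧
        ((windowStep R R M s g).2.1 = false →
          1 ≤ (windowStep R R M s g).1 ∧ (windowStep R R M s g).1 < M ∧
          (windowStep R R M s g).2.2 + ((M : ℝ) - (windowStep R R M s g).1 + 1) * R ≤
            (M + 1) * (o + min g R)) := by
      obtain ⟨c, b, x⟩ := s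
      have hM0 : (0:ℝ) ≤ (M:ℝ) := Nat.cast_nonneg M
      cases b with
      | true =>
        have hx : x + R ≤ ((M:ℝ) + 1) * o := h1 rfl
        by_cases hgR : g ≤ R
        · have hmin : min g R = g := min_eq_left hgR
          rw [windowStep_true, if_pos hgR, hmin]
          refine ⟨fun _ => ?_, fun h => by simp at h⟩
          dsimp only
          nlinarith
        · have hmin : min g R = R := min_eq_right (le_of_not_ge hgR)
          rw [windowStep_true, if_neg hgR, hmin]
          by_cases hM1 : M ≤ 1
          · have hMe : M = 1 := by omega
            have hMc : (M:ℝ) = 1 := by exact_mod_cast hMe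
            rw [show decide (M ≤ 1) = true by simp [hM1]]
            refine ⟨fun _ => ?_, fun h => by simp at h⟩
            dsimp only
            nlinarith
          · have hM2 : 2 ≤ M := by omega
            have hMc : (2:ℝ) ≤ (M:ℝ) := by exact_mod_cast hM2
            rw [show decide (M ≤ 1) = false by simp; omega]
            refine ⟨fun h => by simp at h, fun _ => ⟨le_refl 1, by omega, ?_⟩⟩
            dsimp only
            push_cast
            nlinarith
      | false =>
        obtain ⟨hc1, hcM, hx⟩ := h2 rfl
        dsimp only at hc1 hcM hx
        have hcMc : (c:ℝ) < (M:ℝ) := by exact_mod_cast hcM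
        have hc1c : (1:ℝ) ≤ (c:ℝ) := by exact_mod_cast hc1
        by_cases hgR : g ≤ R
        · have hmin : min g R = g := min_eq_left hgR
          rw [windowStep_false, if_pos hgR, hmin]
          by_cases hMc1 : M ≤ c + 1
          · have hceq : c + 1 = M := by omega
            have hce : (c:ℝ) = (M:ℝ) - 1 := by
              have : ((c:ℝ)) + 1 = (M:ℝ) := by exact_mod_cast hceq
              linarith
            rw [show decide (M ≤ c + 1) = true by simp [hMc1]]
            refine ⟨fun _ => ?_, fun h => by simp at h⟩
            dsimp only
            nlinarith
          · rw [show decide (M ≤ c + 1) = false by simp [hMc1]]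
            refine ⟨fun h => by simp at h, fun _ => ⟨by omega, by omega, ?_⟩⟩
            dsimp only
            push_cast
            nlinarith
        · have hmin : min g R = R := min_eq_right (le_of_not_ge hgR)
          have hM2 : 2 ≤ M := by omega
          rw [windowStep_false, if_neg hgR, hmin,
            show decide (M ≤ 1) = false by simp; omega]
          refine ⟨fun h => by simp at h, fun _ => ⟨le_refl 1, by omega, ?_⟩⟩
          dsimp only
          push_cast
          nlinarith
    have := ih hgs (windowStep R R M s g) (o + min g R) key.1 key.2
    constructor
    · intro h
      have h' := this.1 h
      calc _ ≤ (↑M + 1) * (o + min g R + (gs.map fun g => min g R).sum) := h'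
        _ = (↑M + 1) * (o + (min g R + (gs.map fun g => min g R).sum)) := by ring
    · intro h
      obtain ⟨ha, hb, hc⟩ := this.2 h
      refine ⟨ha, hb, ?_⟩
      calc _ ≤ (↑M + 1) * (o + min g R + (gs.map fun g => min g R).sum) := hc
        _ = (↑M + 1) * (o + (min g R + (gs.map fun g => min g R).sum)) := by ring

lemma fold_replicate (R δ : ℝ) (M : ℕ) (hδR : δ ≤ R) :
    ∀ (n c : ℕ) (x : ℝ), c + n = M → 1 ≤ n →
      (List.replicate n δ).foldl (windowStep R R M) (c, false, x) =
        (M, true, x + n * R) := by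
  intro n
  induction n with
  | zero => intro c x _ h; omega
  | succ k ihk =>
    intro c x hcn _
    rw [List.replicate_succ, List.foldl_cons, windowStep_false, if_pos hδR]
    by_cases hk : k = 0
    · subst hk
      have : c + 1 = M := by omega
      rw [show decide (M ≤ c + 1) = true by simp [this.ge], this]
      simp
    · have hd : decide (M ≤ c + 1) = false := by simp; omega
      rw [hd, ihk (c+1) (x+R) (by omega) (by omega)]
      push_cast
      ring_nf


/-- With `T = R`, the `single-window on M-th` cost is at most
`M + 1` times the optimal offline cost on every request sequence, and this
bound is tight. -/
theorem single_window_Mth_competitive (R : ℝ) (hR : 0 < R) (M : ℕ) (hM : 1 ≤ M) :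
    (∀ gaps : List ℝ, (∀ g ∈ gaps, 0 < g) →
      windowCost R R M gaps ≤ (M + 1) * optCost R gaps) ∧
    (∀ ε, 0 < ε → ∃ gaps : List ℝ,
      (∀ g ∈ gaps, 0 < g) ∧
      ((M : ℝ) + 1 - ε) * optCost R gaps ≤ windowCost R R M gaps) := by
  constructor
  · intro gaps hpos
    have h1 : ((1, decide (M ≤ 1), R) : ℕ × Bool × ℝ).2.1 = true →
        ((1, decide (M ≤ 1), R) : ℕ × Bool × ℝ).2.2 + R ≤ ((M:ℝ) + 1) * R := by
      intro h
      dsimp only at h ⊢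
      have hM1 : M ≤ 1 := of_decide_eq_true h
      have : M = 1 := by omega
      have hMc : (M:ℝ) = 1 := by exact_mod_cast this
      rw [hMc]; linarith
    have h2 : ((1, decide (M ≤ 1), R) : ℕ × Bool × ℝ).2.1 = false →
        1 ≤ ((1, decide (M ≤ 1), R) : ℕ × Bool × ℝ).1 ∧
        ((1, decide (M ≤ 1), R) : ℕ × Bool × ℝ).1 < M ∧
        ((1, decide (M ≤ 1), R) : ℕ × Bool × ℝ).2.2 +
          ((M : ℝ) - ((1, decide (M ≤ 1), R) : ℕ × Bool × ℝ).1 + 1) * R ≤ ((M:ℝ) + 1) * R := by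
      intro h
      dsimp only at h ⊢
      have hM2 : 2 ≤ M := by simp at h; omega
      refine ⟨le_refl 1, by omega, ?_⟩
      push_cast
      linarith
    have := window_inv R hR M hM gaps hpos (1, decide (M ≤ 1), R) R h1 h2
    rw [windowCost, optCost]
    set t := gaps.foldl (windowStep R R M) (1, decide (M ≤ 1), R) with ht
    cases hb : t.2.1 with
    | true =>
      simpa using this.1 hb
    | false =>
      obtain ⟨ha, hbb, hc⟩ := this.2 hb
      have h0 : (0:ℝ) ≤ ((M:ℝ) - t.1 + 1) * R := by
        have : (t.1 : ℝ) ≤ (M:ℝ) := by exact_mod_cast hbb.le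
        nlinarith
      have : t.2.2 ≤ ((M:ℝ) + 1) * (R + (gaps.map (fun g => min g R)).sum) := by linarith
      simpa using this
  · intro ε hε
    set δ : ℝ := R * min ε 1 / ((M:ℝ) + 1)^2 with hδ
    have hMpos : (0:ℝ) < (M:ℝ) + 1 := by positivity
    have hmin_pos : 0 < min ε 1 := lt_min hε one_pos
    have hδpos : 0 < δ := by positivity
    have hδR : δ ≤ R := by
      rw [hδ, div_le_iff₀ (by positivity)]
      have hs : (1:ℝ) ≤ ((M:ℝ) + 1)^2 := by nlinarith [(Nat.cast_nonneg M : (0:ℝ) ≤ (M:ℝ))]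
      nlinarith [mul_le_mul_of_nonneg_left (min_le_right ε 1) hR.le,
        mul_le_mul_of_nonneg_left hs hR.le]
    refine ⟨List.replicate (M - 1) δ, fun g hg => ?_, ?_⟩
    · rw [List.eq_of_mem_replicate hg]; exact hδpos
    · have hfold : (List.replicate (M - 1) δ).foldl (windowStep R R M)
          (1, decide (M ≤ 1), R) = (M, true, R + ((M:ℝ) - 1) * R) := by
        by_cases hM1 : M = 1
        · subst hM1; simp
        · have hM2 : 2 ≤ M := by omega
          rw [show decide (M ≤ 1) = false by simp; omega]
          rw [fold_replicate R δ M hδR (M-1) 1 R (by omega) (by omega)]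
          congr 1
          · congr 2
            have : ((M - 1 : ℕ) : ℝ) = (M:ℝ) - 1 := by
              push_cast [Nat.cast_sub hM]; ring
            rw [this]
      have hwc : windowCost R R M (List.replicate (M - 1) δ) = ((M:ℝ) + 1) * R := by
        rw [windowCost, hfold]
        simp; ring
      have hoc : optCost R (List.replicate (M - 1) δ) = R + ((M:ℝ) - 1) * δ := by
        rw [optCost, List.map_replicate, min_eq_left hδR, List.sum_replicate, nsmul_eq_mul]
        congr 1
        have : ((M - 1 : ℕ) : ℝ) = (M:ℝ) - 1 := by
          push_cast [Nat.cast_sub hM]; ring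
        rw [this]
      rw [hwc, hoc]
      have hMc : (1:ℝ) ≤ (M:ℝ) := by exact_mod_cast hM
      have hkey : ((M:ℝ) + 1) * ((M:ℝ) - 1) * δ ≤ ε * R := by
        have heq : δ * ((M:ℝ)+1)^2 = R * min ε 1 := by
          rw [hδ]; field_simp
        nlinarith [min_le_left ε 1, min_le_right ε 1,
          mul_nonneg hδpos.le (Nat.cast_nonneg M : (0:ℝ) ≤ (M:ℝ)),
          mul_le_mul_of_nonneg_left (min_le_left ε 1) hR.le]
      have hX : R ≤ R + ((M:ℝ) - 1) * δ := by nlinarith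
      nlinarith [mul_le_mul_of_nonneg_left hX hε.le, hkey]
end

section
/- For the 'dual-window on 2nd request' policy, the worst-case competitive ratio against the optimal offline policy is minimized by W = T = R, where it equals 3. -/
/-- One step of the `dual-window on 2nd request` policy with windows `W ≤ T`.
State: `(cached, accumulated cost)`; `g` is the gap since the previous request.
A cached object refreshed within `T` costs `g` of storage; otherwise it was
evicted after `T` time units (storage cost `T`) and the new request is a miss
(cost `R`) with no prior request within `W` (since `W ≤ T < g`), so the object
stays uncached.  A request to an uncached object costs `R` and the object is
inserted iff the previous request occurred within the last `W` time units. -/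
noncomputable def dualStep (R W T : ℝ) : Bool × ℝ → ℝ → Bool × ℝ :=
  fun s g =>
    if s.1 then
      if g ≤ T then (true, s.2 + g)
      else (false, s.2 + T + R)
    else
      (decide (g ≤ W), s.2 + R)

/-- Total cost of the `dual-window on 2nd` policy on the list of inter-request
gaps (the first request is a miss and does not trigger insertion). -/
noncomputable def dualCost (R W T : ℝ) (gaps : List ℝ) : ℝ :=
  let s := gaps.foldl (dualStep R W T) (false, R)
  s.2 + (if s.1 then T else 0)

/-!
Upper bound: with `W = T = R` the potential `Φ = R` on an uncached object and `Φ = 0` on a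
cached one pays for the online cost, i.e. online cost plus change of `Φ` is at most
`3 min (g, R)` on every gap `g`.

Lower bound: alternate a tiny gap `δ ≤ W` (which makes the object cached) with the gap `T + δ`
(which evicts it just before the next request). Each such pair costs the policy `2R + T`, but
the optimum only `δ + min (T + δ, R) ≤ min (T, R) + 2δ`, and `2R + T ≥ 3 min (T, R)`.
-/

theorem List.potential_foldl_le {σ α : Type*} (Φ : σ → ℝ) (c : α → ℝ) (f : σ → α → σ)
    (l : List α) (h : ∀ s, ∀ a ∈ l, Φ (f s a) ≤ Φ s + c a) (s : σ) :
    Φ (l.foldl f s) ≤ Φ s + (l.map c).sum := by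
  induction l generalizing s with
  | nil => simp
  | cons a l ih =>
    have hstep := h s a List.mem_cons_self
    have htail := ih (fun s a ha => h s a (List.mem_cons_of_mem _ ha)) (f s a)
    simp only [List.foldl_cons, List.map_cons, List.sum_cons]
    linarith

noncomputable def dualPotential (R : ℝ) (s : Bool × ℝ) : ℝ :=
  s.2 + if s.1 then 0 else R

theorem dualPotential_dualStep_le {R g : ℝ} (hR : 0 ≤ R) (hg : 0 ≤ g) (s : Bool × ℝ) :
    dualPotential R (dualStep R R R s g) ≤ dualPotential R s + 3 * min g R := by
  obtain ⟨_ | _, c⟩ := s <;> by_cases hgR : g ≤ R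
  all_goals
    simp only [dualPotential, dualStep, hgR, decide_true, decide_false, if_true, if_false,
      Bool.false_eq_true]
  · rw [min_eq_left hgR]; linarith
  · rw [min_eq_right (le_of_not_ge hgR)]; linarith
  · rw [min_eq_left hgR]; linarith
  · rw [min_eq_right (le_of_not_ge hgR)]; linarith

theorem dualCost_le_three_mul_optCost {R : ℝ} (hR : 0 ≤ R) (gaps : List ℝ)
    (hgaps : ∀ g ∈ gaps, 0 ≤ g) : dualCost R R R gaps ≤ 3 * optCost R gaps := by
  have hfold := List.potential_foldl_le (dualPotential R) (fun g => 3 * min g R)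
    (dualStep R R R) gaps (fun s g hg => dualPotential_dualStep_le hR (hgaps g hg) s) (false, R)
  have hfinal :
      dualCost R R R gaps ≤ dualPotential R (gaps.foldl (dualStep R R R) (false, R)) + R := by
    dsimp only [dualCost, dualPotential]
    split_ifs <;> linarith
  have hstart : dualPotential R (false, R) = R + R := by simp [dualPotential]
  rw [hstart, List.sum_map_mul_left] at hfold
  rw [optCost]
  linarith

theorem optCost_nonneg {R : ℝ} (hR : 0 ≤ R) {gaps : List ℝ} (hgaps : ∀ g ∈ gaps, 0 ≤ g) :
    0 ≤ optCost R gaps :=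
  add_nonneg hR <| List.sum_nonneg <| by
    simpa using fun g hg => le_min (hgaps g hg) hR

noncomputable def evictionGaps (δ T : ℝ) (n : ℕ) : List ℝ :=
  (List.replicate n [δ, T + δ]).flatten

theorem evictionGaps_succ (δ T : ℝ) (n : ℕ) :
    evictionGaps δ T (n + 1) = δ :: (T + δ) :: evictionGaps δ T n := by
  simp [evictionGaps, List.replicate_succ]

theorem evictionGaps_pos {δ T : ℝ} (hδ : 0 < δ) (hT : 0 ≤ T) (n : ℕ) :
    ∀ g ∈ evictionGaps δ T n, 0 < g := by
  induction n with
  | zero => simp [evictionGaps]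
  | succ n ih =>
    rw [evictionGaps_succ]
    rintro g (_ | ⟨_, _ | ⟨_, hg⟩⟩)
    exacts [hδ, by linarith, ih g hg]

theorem foldl_dualStep_evictionGaps {R W T δ : ℝ} (hδ : 0 < δ) (hδW : δ ≤ W) (n : ℕ) (c : ℝ) :
    (evictionGaps δ T n).foldl (dualStep R W T) (false, c) = (false, c + n * (2 * R + T)) := by
  induction n generalizing c with
  | zero => simp [evictionGaps]
  | succ n ih =>
    have hcache : dualStep R W T (false, c) δ = (true, c + R) := by simp [dualStep, hδW]
    have hevict : dualStep R W T (true, c + R) (T + δ) = (false, c + R + T + R) := by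
      simp [dualStep, hδ.not_ge]
    rw [evictionGaps_succ, List.foldl_cons, List.foldl_cons, hcache, hevict, ih]
    push_cast
    ring_nf

theorem dualCost_evictionGaps {R W T δ : ℝ} (hδ : 0 < δ) (hδW : δ ≤ W) (n : ℕ) :
    dualCost R W T (evictionGaps δ T n) = R + n * (2 * R + T) := by
  simp [dualCost, foldl_dualStep_evictionGaps hδ hδW]

theorem optCost_evictionGaps_le {R T δ : ℝ} (hδ : 0 ≤ δ) (n : ℕ) :
    optCost R (evictionGaps δ T n) ≤ R + n * (min T R + 2 * δ) := by
  have hpair : min δ R + min (T + δ) R ≤ min T R + 2 * δ := by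
    have h1 : min δ R ≤ δ := min_le_left _ _
    have h2 : min (T + δ) R ≤ min (T + δ) (R + δ) := min_le_min le_rfl (by linarith)
    rw [min_add_add_right] at h2
    linarith
  simp only [optCost, evictionGaps, List.map_flatten, List.map_replicate, List.sum_flatten,
    List.sum_replicate, List.map_cons, List.map_nil, List.sum_cons, List.sum_nil, add_zero,
    nsmul_eq_mul]
  gcongr

theorem exists_gaps_dualCost_ge {R W T ε : ℝ} (hR : 0 < R) (hW : 0 < W) (hWT : W ≤ T)
    (hε : 0 < ε) : ∃ gaps : List ℝ, (∀ g ∈ gaps, 0 < g) ∧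
      (3 - ε) * optCost R gaps ≤ dualCost R W T gaps := by
  set m := min T R
  have hm : 0 < m := lt_min (hW.trans_le hWT) hR
  have hm3 : 3 * m ≤ 2 * R + T := by
    have := min_le_left T R; have := min_le_right T R; linarith
  -- `6δ ≤ εm/2` absorbs the `2δ` per pair, and `n εm/2 ≥ 2R` the first request.
  set δ := min W (ε * m / 12)
  have hδ : 0 < δ := lt_min hW (by positivity)
  have hδm : δ ≤ ε * m / 12 := min_le_right _ _
  obtain ⟨n, hn⟩ := exists_nat_ge (4 * R / (ε * m))
  have hnR : 4 * R ≤ n * (ε * m) := by rwa [div_le_iff₀ (by positivity)] at hn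
  refine ⟨evictionGaps δ T n, evictionGaps_pos hδ (hW.le.trans hWT) n, ?_⟩
  rw [dualCost_evictionGaps hδ (min_le_left _ _)]
  have hopt := optCost_evictionGaps_le (R := R) (T := T) hδ.le n
  have hn0 : (0 : ℝ) ≤ n := n.cast_nonneg
  rcases le_or_gt ε 3 with hε3 | hε3
  · calc (3 - ε) * optCost R (evictionGaps δ T n)
        ≤ (3 - ε) * (R + n * (m + 2 * δ)) := by gcongr
      _ ≤ R + n * (2 * R + T) := by
        nlinarith [mul_le_mul_of_nonneg_left hm3 hn0, mul_le_mul_of_nonneg_left hδm hn0,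
          mul_nonneg hn0 (mul_nonneg hε.le hδ.le)]
  · have hopt0 := optCost_nonneg hR.le fun g hg =>
      (evictionGaps_pos hδ (hW.le.trans hWT) n g hg).le
    nlinarith [mul_nonneg hn0 (by linarith : (0 : ℝ) ≤ 2 * R + T)]

/-- The worst-case competitive ratio of the `dual-window on 2nd`
policy against the optimal offline policy is minimized by `W = T = R`, where it
equals `3`: with `W = T = R` the cost is at most `3` times optimal on every
sequence, while for every admissible `(W, T)` the worst-case ratio is at
least `3`. -/
theorem dual_window_2nd_competitive (R : ℝ) (hR : 0 < R) :
    (∀ gaps : List ℝ, (∀ g ∈ gaps, 0 < g) →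
      dualCost R R R gaps ≤ 3 * optCost R gaps) ∧
    (∀ W T : ℝ, 0 < W → W ≤ T → ∀ ε, 0 < ε → ∃ gaps : List ℝ,
      (∀ g ∈ gaps, 0 < g) ∧
      (3 - ε) * optCost R gaps ≤ dualCost R W T gaps) :=
  ⟨fun gaps hgaps => dualCost_le_three_mul_optCost hR.le gaps fun g hg => (hgaps g hg).le,
    fun _ _ hW hWT _ hε => exists_gaps_dualCost_ge hR hW hWT hε⟩
end

section
/- For Erlang(k, \lambda) inter-request times, the average cost per unit time of the optimal offline policy equals 1 - (e^{-\lambda R}/k) * \sum_{m=1}^{k} \sum_{n=0}^{m-1} (\lambda R)^n / n!. -/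
/-!
Writing `P m x = ∑_{n<m} x^n / n!`, the survival function of the Erlang law is
`1 - F t = exp (-λ t) * P k (λ t)`. Since `P (m + 1)' = P m` and `P 0 = 0`, the derivative of
`-exp (-x) * ∑_{m<k} P (m + 1) x` telescopes to `exp (-x) * P k x`, which gives
`λ ∫_0^R (1 - F) = k - exp (-λ R) * ∑_{m=1}^k P m (λ R)`.
-/

open Finset Real

noncomputable def expTrunc (m : ℕ) (x : ℝ) : ℝ := ∑ n ∈ range m, x ^ n / n.factorial

lemma expTrunc_succ (m : ℕ) (x : ℝ) :
    expTrunc (m + 1) x = expTrunc m x + x ^ m / m.factorial :=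
  sum_range_succ _ _

lemma expTrunc_succ_zero (m : ℕ) : expTrunc (m + 1) 0 = 1 := by
  induction m with
  | zero => simp [expTrunc]
  | succ m ih => simp [expTrunc_succ m.succ, ih]

lemma hasDerivAt_expTrunc_succ (m : ℕ) (x : ℝ) :
    HasDerivAt (expTrunc (m + 1)) (expTrunc m x) x := by
  induction m with
  | zero =>
    have hconst : expTrunc 1 = fun _ => 1 := by ext y; simp [expTrunc]
    simpa [hconst, expTrunc] using hasDerivAt_const x (1 : ℝ)
  | succ m ih =>
    have hterm : HasDerivAt (fun y : ℝ => y ^ (m + 1) / (m + 1).factorial)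
        (x ^ m / m.factorial) x := by
      refine ((hasDerivAt_pow (m + 1) x).div_const _).congr_deriv ?_
      rw [Nat.factorial_succ]
      push_cast
      field_simp
    rw [expTrunc_succ m x]
    exact (ih.add hterm).congr_of_eventuallyEq (.of_forall fun y => expTrunc_succ _ y)

lemma continuous_exp_neg_mul_expTrunc (k : ℕ) (lam : ℝ) :
    Continuous fun t => exp (-(lam * t)) * expTrunc k (lam * t) := by
  unfold expTrunc
  fun_prop

lemma hasDerivAt_neg_exp_neg_mul_sum_expTrunc (k : ℕ) (x : ℝ) :
    HasDerivAt (fun y => -(exp (-y) * ∑ m ∈ range k, expTrunc (m + 1) y))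
      (exp (-x) * expTrunc k x) x := by
  have hsum : HasDerivAt (fun y => ∑ m ∈ range k, expTrunc (m + 1) y)
      (∑ m ∈ range k, expTrunc m x) x :=
    HasDerivAt.fun_sum fun m _ => hasDerivAt_expTrunc_succ m x
  have htelescope :
      ∑ m ∈ range k, expTrunc (m + 1) x - ∑ m ∈ range k, expTrunc m x = expTrunc k x := by
    rw [← sum_sub_distrib, sum_range_sub (fun m => expTrunc m x)]
    simp [expTrunc]
  refine ((hasDerivAt_neg x).exp.mul hsum).neg.congr_deriv ?_
  rw [← htelescope]
  ring

lemma mul_integral_exp_neg_mul_expTrunc (k : ℕ) (lam R : ℝ) :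
    lam * ∫ t in (0 : ℝ)..R, exp (-(lam * t)) * expTrunc k (lam * t)
      = k - exp (-(lam * R)) * ∑ m ∈ range k, expTrunc (m + 1) (lam * R) := by
  have hderiv (t : ℝ) := (hasDerivAt_neg_exp_neg_mul_sum_expTrunc k (lam * t)).comp t
    ((hasDerivAt_id t).const_mul lam)
  rw [← intervalIntegral.integral_const_mul, intervalIntegral.integral_eq_sub_of_hasDerivAt
    (f := fun t => -(exp (-(lam * t)) * ∑ m ∈ range k, expTrunc (m + 1) (lam * t)))]
  · simp only [mul_zero, neg_zero, exp_zero, expTrunc_succ_zero, sum_const, card_range,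
      nsmul_eq_mul, mul_one, one_mul, sub_neg_eq_add]
    ring
  · exact fun t _ => (hderiv t).congr_deriv (by ring)
  · exact ((continuous_exp_neg_mul_expTrunc k lam).const_mul lam).intervalIntegrable 0 R

theorem offline_average_cost_erlang_general (k : ℕ) (hk : 1 ≤ k) (lam R : ℝ) :
    (lam / k) * (R - ∫ t in (0:ℝ)..R,
        (1 - ∑ n ∈ Finset.range k, Real.exp (-(lam * t)) * (lam * t) ^ n / n.factorial)) =
      1 - (Real.exp (-(lam * R)) / k) *
        ∑ m ∈ Finset.Icc 1 k, ∑ n ∈ Finset.range m, (lam * R) ^ n / n.factorial := by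
  have hsurvival (t : ℝ) : ∑ n ∈ range k, exp (-(lam * t)) * (lam * t) ^ n / n.factorial
      = exp (-(lam * t)) * expTrunc k (lam * t) := by
    simp only [expTrunc, mul_sum, mul_div_assoc]
  have hIcc : ∑ m ∈ Icc 1 k, ∑ n ∈ range m, (lam * R) ^ n / n.factorial
      = ∑ m ∈ range k, expTrunc (m + 1) (lam * R) := by
    rw [← Ico_add_one_right_eq_Icc, sum_Ico_eq_sum_range]
    simp [expTrunc, add_comm]
  have hk0 : (k : ℝ) ≠ 0 := Nat.cast_ne_zero.mpr (by omega)
  simp only [hsurvival]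
  rw [intervalIntegral.integral_sub intervalIntegrable_const
      ((continuous_exp_neg_mul_expTrunc k lam).intervalIntegrable 0 R),
    intervalIntegral.integral_const, smul_eq_mul, mul_one, sub_zero, sub_sub_cancel, hIcc,
    div_mul_eq_mul_div, div_mul_eq_mul_div, mul_integral_exp_neg_mul_expTrunc]
  field_simp

/-- For Erlang(k, λ) inter-request times (CDF
`F t = 1 - ∑_{n=0}^{k-1} exp (-λ t) (λ t)^n / n!`, mean `k/λ`), the average
cost per unit time of the optimal offline policy,
`(λ/k) * (R - ∫_0^R F(t) dt)`, equals
`1 - (exp (-λ R)/k) * ∑_{m=1}^{k} ∑_{n=0}^{m-1} (λ R)^n / n!`. -/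
theorem offline_average_cost_erlang (k : ℕ) (hk : 1 ≤ k) (lam R : ℝ)
    (hlam : 0 < lam) (hR : 0 < R) :
    (lam / k) * (R - ∫ t in (0:ℝ)..R,
        (1 - ∑ n ∈ Finset.range k, Real.exp (-(lam * t)) * (lam * t) ^ n / n.factorial)) =
      1 - (Real.exp (-(lam * R)) / k) *
        ∑ m ∈ Finset.Icc 1 k, ∑ n ∈ Finset.range m, (lam * R) ^ n / n.factorial :=
  offline_average_cost_erlang_general k hk lam R
end

section
/- If the inter-request time distribution has a continuously differentiable hazard rate that is strictly increasing, then for the cost function C(t*) = R(1 - F(t*)) + t* - \int_0^{t*} F(t) dt, every interior critical point (where R = (1 - F(t*))/f(t*)) is a local maximum; hence the infimum of C over [0, \infty] is attained at t* = 0 or in the limit t* \to \infty. -/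
/-!
With hazard rate `h = f / (1 - F)`, the derivative of the cost is
`C' = 1 - F - R f = (1 - F) (1 - R h)`. As `h` increases strictly, `C'` changes sign at most
once on `[0, ∞)`, and only from positive to negative: `C` increases and then decreases. So an
interior critical point is a maximum, and every value `C t` is at least `C 0` (if `C` is
still increasing at `t`) or at least the values after `t`, hence at least `liminf C`.

`liminf` carries a junk value unless `C` is bounded on `[0, ∞)`, which holds because
`h s ≥ h 0 = f 0` gives `1 - F s ≤ f s / f 0`, so `∫₀ᵗ (1 - F) ≤ F t / f 0 ≤ 1 / f 0`.
-/

open Set Filter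

theorem sInf_image_Ici_eq_min_liminf {α β : Type*} [LinearOrder α]
    [ConditionallyCompleteLinearOrder β] {g : α → β} {a : α}
    (hbdd_below : BddBelow (g '' Ici a)) (hbdd_above : BddAbove (g '' Ici a))
    (h : ∀ t, a ≤ t → g a ≤ g t ∨ AntitoneOn g (Ici t)) :
    sInf (g '' Ici a) = min (g a) (liminf g atTop) := by
  have : Nonempty α := ⟨a⟩
  obtain ⟨m, hm⟩ := hbdd_below
  obtain ⟨M, hM⟩ := hbdd_above
  have hbelow : ∀ᶠ t in atTop, sInf (g '' Ici a) ≤ g t :=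
    eventually_ge_atTop a |>.mono fun t ht => csInf_le ⟨m, hm⟩ (mem_image_of_mem g ht)
  have hcobdd : IsCoboundedUnder (· ≥ ·) atTop g :=
    isCoboundedUnder_ge_of_eventually_le atTop
      (eventually_ge_atTop a |>.mono fun t ht => hM (mem_image_of_mem g ht))
  have hbdd : IsBoundedUnder (· ≥ ·) atTop g :=
    isBoundedUnder_of_eventually_ge
      (eventually_ge_atTop a |>.mono fun t ht => hm (mem_image_of_mem g ht))
  refine le_antisymm
    (le_min (csInf_le ⟨m, hm⟩ (mem_image_of_mem g self_mem_Ici)) (le_liminf_of_le hcobdd hbelow))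
    (le_csInf (image_nonempty.2 nonempty_Ici) ?_)
  rintro _ ⟨t, ht, rfl⟩
  rcases h t ht with h_ge | h_anti
  · exact (min_le_left _ _).trans h_ge
  · refine (min_le_right _ _).trans (liminf_le_of_frequently_le ?_ hbdd)
    exact (eventually_ge_atTop t |>.mono fun s hs => h_anti self_mem_Ici hs hs).frequently

section Hazard

variable {f F : ℝ → ℝ}

theorem hasDerivAt_of_eq_integral (hf : Continuous f) (hF : ∀ x, F x = ∫ t in (0:ℝ)..x, f t)
    (x : ℝ) : HasDerivAt F (f x) x :=
  (hf.integral_hasStrictDerivAt 0 x).hasDerivAt.congr_of_eventuallyEq (.of_forall hF)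

theorem continuous_of_eq_integral (hf : Continuous f) (hF : ∀ x, F x = ∫ t in (0:ℝ)..x, f t) :
    Continuous F :=
  continuous_iff_continuousAt.2 fun x => (hasDerivAt_of_eq_integral hf hF x).continuousAt

theorem mul_one_sub_lt_of_hazard_strictMonoOn (hFlt : ∀ t, F t < 1)
    (hhaz : StrictMonoOn (fun t => f t / (1 - F t)) (Ici 0)) {s t : ℝ} (hs : 0 ≤ s)
    (hst : s < t) : f s * (1 - F t) < f t * (1 - F s) :=
  (div_lt_div_iff₀ (sub_pos.2 (hFlt s)) (sub_pos.2 (hFlt t))).1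
    (hhaz hs (hs.trans hst.le) hst)

variable {R : ℝ}

theorem mul_lt_one_sub_of_lt_of_hazard (hfpos : ∀ t, 0 < f t) (hFlt : ∀ t, F t < 1)
    (hhaz : StrictMonoOn (fun t => f t / (1 - F t)) (Ici 0)) {x a : ℝ} (hx : 0 ≤ x)
    (hxa : x < a) (ha : R * f a ≤ 1 - F a) : R * f x < 1 - F x := by
  have := mul_one_sub_lt_of_hazard_strictMonoOn hFlt hhaz hx hxa
  nlinarith [sub_pos.2 (hFlt a), sub_pos.2 (hFlt x), hfpos x, hfpos a]

theorem one_sub_lt_mul_of_gt_of_hazard (hfpos : ∀ t, 0 < f t) (hFlt : ∀ t, F t < 1)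
    (hhaz : StrictMonoOn (fun t => f t / (1 - F t)) (Ici 0)) {x a : ℝ} (ha : 0 ≤ a)
    (hax : a < x) (ha' : 1 - F a ≤ R * f a) : 1 - F x < R * f x := by
  have := mul_one_sub_lt_of_hazard_strictMonoOn hFlt hhaz ha hax
  nlinarith [sub_pos.2 (hFlt a), sub_pos.2 (hFlt x), hfpos x, hfpos a]

theorem one_sub_le_div_of_hazard_monotoneOn (hF0 : F 0 = 0) (hfpos : ∀ t, 0 < f t)
    (hFlt : ∀ t, F t < 1) (hhaz : MonotoneOn (fun t => f t / (1 - F t)) (Ici 0)) {s : ℝ}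
    (hs : 0 ≤ s) : 1 - F s ≤ f s / f 0 := by
  have := hhaz self_mem_Ici hs hs
  simp only [hF0, sub_zero, div_one] at this
  rw [le_div_iff₀ (hfpos 0)]
  rwa [le_div_iff₀ (sub_pos.2 (hFlt s)), mul_comm] at this

theorem integral_one_sub_le (hf : Continuous f) (hfpos : ∀ t, 0 < f t)
    (hF : ∀ x, F x = ∫ t in (0:ℝ)..x, f t) (hFlt : ∀ t, F t < 1)
    (hhaz : MonotoneOn (fun t => f t / (1 - F t)) (Ici 0)) {t : ℝ} (ht : 0 ≤ t) :
    ∫ s in (0:ℝ)..t, (1 - F s) ≤ 1 / f 0 := by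
  have hFc := continuous_of_eq_integral hf hF
  calc ∫ s in (0:ℝ)..t, (1 - F s) ≤ ∫ s in (0:ℝ)..t, f s / f 0 :=
        intervalIntegral.integral_mono_on ht ((continuous_const.sub hFc).intervalIntegrable _ _)
          ((hf.div_const _).intervalIntegrable _ _) fun s hs =>
            one_sub_le_div_of_hazard_monotoneOn (by simp [hF]) hfpos hFlt hhaz hs.1
    _ = F t / f 0 := by rw [intervalIntegral.integral_div, hF]
    _ ≤ 1 / f 0 := div_le_div_of_nonneg_right (hFlt t).le (hfpos 0).le

variable {C : ℝ → ℝ}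

theorem hasDerivAt_cost (hf : Continuous f) (hF : ∀ x, F x = ∫ t in (0:ℝ)..x, f t)
    (hC : ∀ t, C t = R * (1 - F t) + t - ∫ s in (0:ℝ)..t, F s) (x : ℝ) :
    HasDerivAt C (1 - F x - R * f x) x := by
  have hsurv := ((hasDerivAt_const x 1).sub (hasDerivAt_of_eq_integral hf hF x)).const_mul R
  have := (hsurv.add (hasDerivAt_id x)).sub
    ((continuous_of_eq_integral hf hF).integral_hasStrictDerivAt 0 x).hasDerivAt
  exact (this.congr_of_eventuallyEq (.of_forall hC)).congr_deriv (by ring)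

theorem monotoneOn_Icc_cost (hC : ∀ x, HasDerivAt C (1 - F x - R * f x) x)
    (hfpos : ∀ t, 0 < f t) (hFlt : ∀ t, F t < 1)
    (hhaz : StrictMonoOn (fun t => f t / (1 - F t)) (Ici 0)) {a : ℝ}
    (ha : R * f a ≤ 1 - F a) : MonotoneOn C (Icc 0 a) := by
  refine (strictMonoOn_of_deriv_pos (convex_Icc 0 a)
    (HasDerivAt.continuousOn fun x _ => hC x) fun x hx => ?_).monotoneOn
  rw [interior_Icc] at hx
  rw [(hC x).deriv, sub_pos]
  exact mul_lt_one_sub_of_lt_of_hazard hfpos hFlt hhaz hx.1.le hx.2 ha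

theorem antitoneOn_Ici_cost (hC : ∀ x, HasDerivAt C (1 - F x - R * f x) x)
    (hfpos : ∀ t, 0 < f t) (hFlt : ∀ t, F t < 1)
    (hhaz : StrictMonoOn (fun t => f t / (1 - F t)) (Ici 0)) {a : ℝ} (ha₀ : 0 ≤ a)
    (ha : 1 - F a ≤ R * f a) : AntitoneOn C (Ici a) := by
  refine (strictAntiOn_of_deriv_neg (convex_Ici a)
    (HasDerivAt.continuousOn fun x _ => hC x) fun x hx => ?_).antitoneOn
  rw [interior_Ici] at hx
  rw [(hC x).deriv, sub_neg]
  exact one_sub_lt_mul_of_gt_of_hazard hfpos hFlt hhaz ha₀ hx ha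

theorem cost_mem_Icc (hf : Continuous f) (hfpos : ∀ t, 0 < f t)
    (hF : ∀ x, F x = ∫ t in (0:ℝ)..x, f t) (hFlt : ∀ t, F t < 1)
    (hhaz : MonotoneOn (fun t => f t / (1 - F t)) (Ici 0))
    (hC : ∀ t, C t = R * (1 - F t) + t - ∫ s in (0:ℝ)..t, F s) {t : ℝ} (ht : 0 ≤ t) :
    C t ∈ Icc (-|R|) (|R| + 1 / f 0) := by
  have hFc := continuous_of_eq_integral hf hF
  have hC' : C t = R * (1 - F t) + ∫ s in (0:ℝ)..t, (1 - F s) := by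
    rw [hC, intervalIntegral.integral_sub intervalIntegrable_const (hFc.intervalIntegrable 0 t)]
    simp only [intervalIntegral.integral_const, sub_zero, smul_eq_mul, mul_one]
    ring
  have hsurv : |R * (1 - F t)| ≤ |R| := by
    have hF_nonneg : 0 ≤ F t := hF t ▸ intervalIntegral.integral_nonneg ht fun s _ => (hfpos s).le
    rw [abs_mul, abs_of_pos (sub_pos.2 (hFlt t))]
    exact mul_le_of_le_one_right (abs_nonneg R) (by linarith)
  have hint_nonneg : 0 ≤ ∫ s in (0:ℝ)..t, (1 - F s) :=
    intervalIntegral.integral_nonneg ht fun s _ => (sub_pos.2 (hFlt s)).le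
  have hint_le := integral_one_sub_le hf hfpos hF hFlt hhaz ht
  rw [hC']
  constructor <;> linarith [abs_le.1 hsurv]

end Hazard

theorem increasing_hazard_local_max_general (R : ℝ) (f F : ℝ → ℝ)
    (hf : ContDiff ℝ 1 f) (hfpos : ∀ t, 0 < f t)
    (hF : ∀ x, F x = ∫ t in (0:ℝ)..x, f t)
    (hFlt : ∀ t, F t < 1)
    (hhaz : StrictMonoOn (fun t => f t / (1 - F t)) (Set.Ici 0))
    (C : ℝ → ℝ)
    (hC : ∀ t, C t = R * (1 - F t) + t - ∫ s in (0:ℝ)..t, F s) :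
    (∀ t, 0 < t → R * f t = 1 - F t → IsLocalMax C t) ∧
    sInf (C '' Set.Ici 0) = min (C 0) (Filter.liminf C Filter.atTop) := by
  have hC' := hasDerivAt_cost hf.continuous hF hC
  refine ⟨fun t ht hcrit => ?_, ?_⟩
  · exact isLocalMax_of_mono_anti ht (lt_add_one t)
      ((monotoneOn_Icc_cost hC' hfpos hFlt hhaz hcrit.le).mono Ioc_subset_Icc_self)
      ((antitoneOn_Ici_cost hC' hfpos hFlt hhaz ht.le hcrit.ge).mono Ico_subset_Ici_self)
  · have hbounds : C '' Ici 0 ⊆ Icc (-|R|) (|R| + 1 / f 0) := by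
      rintro _ ⟨t, ht, rfl⟩
      exact cost_mem_Icc hf.continuous hfpos hF hFlt hhaz.monotoneOn hC ht
    refine sInf_image_Ici_eq_min_liminf (bddBelow_Icc.mono hbounds) (bddAbove_Icc.mono hbounds)
      fun t ht => ?_
    rcases le_or_gt (R * f t) (1 - F t) with h | h
    · exact .inl (monotoneOn_Icc_cost hC' hfpos hFlt hhaz h ⟨le_rfl, ht⟩ ⟨ht, le_rfl⟩ ht)
    · exact .inr (antitoneOn_Ici_cost hC' hfpos hFlt hhaz ht h.le)

/-- If the inter-request time distribution (density `f`, CDF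
`F x = ∫_0^x f`) has a continuously differentiable, strictly increasing hazard
rate `f t / (1 - F t)`, then for the cost function
`C t = R (1 - F t) + t - ∫_0^t F`, every interior critical point (where
`R f t = 1 - F t`, i.e. `R = (1 - F t)/f t`) is a local maximum; hence the
infimum of `C` over `[0, ∞)` is attained at `t = 0` or in the limit
`t → ∞`. -/
theorem increasing_hazard_local_max (R : ℝ) (hR : 0 < R) (f F : ℝ → ℝ)
    (hf : ContDiff ℝ 1 f) (hfpos : ∀ t, 0 < f t)
    (hF : ∀ x, F x = ∫ t in (0:ℝ)..x, f t)
    (hFlt : ∀ t, F t < 1)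
    (hhaz : StrictMonoOn (fun t => f t / (1 - F t)) (Set.Ici 0))
    (C : ℝ → ℝ)
    (hC : ∀ t, C t = R * (1 - F t) + t - ∫ s in (0:ℝ)..t, F s) :
    (∀ t, 0 < t → R * f t = 1 - F t → IsLocalMax C t) ∧
    sInf (C '' Set.Ici 0) = min (C 0) (Filter.liminf C Filter.atTop) :=
  increasing_hazard_local_max_general R f F hf hfpos hF hFlt hhaz C hC
end

section
/- For exponential inter-request times, the ratio of the static baseline cost min(\lambda R, 1) to the optimal offline cost 1 - e^{-\lambda R} is at most 1/(1 - 1/e) for all \lambda > 0 and R > 0, with equality at \lambda R = 1. -/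
/-- For exponential inter-request times, the ratio of the static
baseline cost `min (λ R) 1` to the optimal offline cost `1 - exp (-λ R)` is at
most `1/(1 - 1/e)` for all `λ, R > 0`, with equality at `λ R = 1`. -/
theorem static_baseline_ratio_exponential (lam R : ℝ) (hlam : 0 < lam) (hR : 0 < R) :
    min (lam * R) 1 / (1 - Real.exp (-(lam * R))) ≤ 1 / (1 - Real.exp (-1)) ∧
    (lam * R = 1 →
      min (lam * R) 1 / (1 - Real.exp (-(lam * R))) = 1 / (1 - Real.exp (-1))) := by
  set x := lam * R with hxdef
  have hx : 0 < x := mul_pos hlam hR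
  have hd : 0 < 1 - Real.exp (-x) := by
    have : Real.exp (-x) < 1 := Real.exp_lt_one_iff.mpr (by linarith)
    linarith
  have hd1 : 0 < 1 - Real.exp (-1) := by
    have : Real.exp (-1 : ℝ) < 1 := Real.exp_lt_one_iff.mpr (by norm_num)
    linarith
  constructor
  · rw [div_le_div_iff₀ hd hd1]
    rcases le_or_gt x 1 with h1 | h1
    · rw [min_eq_left h1]
      -- convexity of exp: exp(-x) ≤ (1-x) * exp 0 + x * exp (-1)
      have hc := convexOn_exp.2 (Set.mem_univ (0 : ℝ)) (Set.mem_univ (-1 : ℝ))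
        (by linarith : (0:ℝ) ≤ 1 - x) hx.le (by ring)
      simp only [smul_eq_mul, mul_zero, mul_neg_one, zero_add, Real.exp_zero, mul_one] at hc
      nlinarith [hc]
    · rw [min_eq_right h1.le]
      have : Real.exp (-x) ≤ Real.exp (-1) := Real.exp_le_exp.mpr (by linarith)
      nlinarith
  · intro h
    rw [h]
    norm_num
end

section
/- For Erlang(k, \lambda) inter-request times, the ratio of the static baseline cost min((\lambda/k) R, 1) to the optimal offline cost 1 - (e^{-\lambda R}/k) \sum_{m=1}^{k} \sum_{n=0}^{m-1} (\lambda R)^n / n! is at most 1/(1 - e^{-k} k^k / k!), attained at \lambda = k/R. -/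
/-!
Write `x = λR` and `T m` for the Taylor polynomial `∑_{n<m} xⁿ/n!` of `exp`. The offline cost is
`C(x) = 1 - e^{-x} ∑_{m=1}^k T m x / k`, and `(T (m+1))' = T m` telescopes the derivative to
`C'(x) = e^{-x} T k x / k > 0`, whose own derivative `-e^{-x} x^{k-1} / (k (k-1)!)` is `≤ 0` for
`x ≥ 0`. So `C` is increasing and concave on `[0, ∞)` with `C 0 = 0`: concavity gives
`C x ≥ (x/k) C k` on `[0, k]` and monotonicity gives `C x ≥ C k` beyond, i.e.
`min (x/k) 1 * C k ≤ C x`, with equality at `x = k`.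
-/

open Finset Real
open scoped Nat

noncomputable def expTaylor (k : ℕ) (x : ℝ) : ℝ := ∑ n ∈ range k, x ^ n / n !

theorem expTaylor_succ (k : ℕ) (x : ℝ) : expTaylor (k + 1) x = expTaylor k x + x ^ k / k ! :=
  sum_range_succ _ _

theorem one_le_expTaylor {k : ℕ} (hk : k ≠ 0) {x : ℝ} (hx : 0 ≤ x) : 1 ≤ expTaylor k x := by
  obtain ⟨j, rfl⟩ := Nat.exists_eq_succ_of_ne_zero hk
  rw [expTaylor, sum_range_succ']
  simp only [pow_zero, Nat.factorial_zero, Nat.cast_one, div_one, le_add_iff_nonneg_left]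
  positivity

theorem hasDerivAt_expTaylor_succ (k : ℕ) (x : ℝ) :
    HasDerivAt (expTaylor (k + 1)) (expTaylor k x) x := by
  induction k with
  | zero =>
    have hone : expTaylor 1 = fun _ => 1 := funext fun y => by simp [expTaylor]
    simpa [hone, expTaylor] using hasDerivAt_const x (1 : ℝ)
  | succ k ih =>
    have hpow : HasDerivAt (fun y : ℝ => y ^ (k + 1) / (k + 1) !) (x ^ k / k !) x := by
      refine ((hasDerivAt_pow (k + 1) x).div_const ((k + 1) ! : ℝ)).congr_deriv ?_
      rw [Nat.factorial_succ]
      push_cast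
      field_simp
    rw [expTaylor_succ k x]
    exact (ih.add hpow).congr_of_eventuallyEq
      (Filter.Eventually.of_forall fun y => expTaylor_succ (k + 1) y)

theorem hasDerivAt_exp_neg_mul_expTaylor_succ (k : ℕ) (x : ℝ) :
    HasDerivAt (fun y => exp (-y) * expTaylor (k + 1) y) (-(exp (-x) * (x ^ k / k !))) x := by
  refine (((hasDerivAt_neg x).exp).mul (hasDerivAt_expTaylor_succ k x)).congr_deriv ?_
  rw [expTaylor_succ]
  ring

theorem hasDerivAt_exp_neg_mul_sum_expTaylor (k : ℕ) (x : ℝ) :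
    HasDerivAt (fun y => exp (-y) * ∑ m ∈ Icc 1 k, expTaylor m y)
      (-(exp (-x) * expTaylor k x)) x := by
  induction k with
  | zero => simpa [expTaylor] using hasDerivAt_const x (0 : ℝ)
  | succ k ih =>
    simp only [sum_Icc_succ_top (Nat.le_add_left 1 k), mul_add]
    refine (ih.add (hasDerivAt_exp_neg_mul_expTaylor_succ k x)).congr_deriv ?_
    rw [expTaylor_succ]
    ring

theorem sum_Icc_expTaylor (k : ℕ) (x : ℝ) :
    ∑ m ∈ Icc 1 (k + 1), expTaylor m x = (k + 1) * expTaylor (k + 1) x - x * expTaylor k x := by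
  induction k with
  | zero => simp [expTaylor]
  | succ k ih =>
    rw [sum_Icc_succ_top (Nat.le_add_left 1 _), ih, expTaylor_succ (k + 1), expTaylor_succ k,
      Nat.factorial_succ]
    push_cast
    field_simp
    ring

noncomputable def erlangOptCost (k : ℕ) (x : ℝ) : ℝ :=
  1 - exp (-x) / k * ∑ m ∈ Icc 1 k, expTaylor m x

theorem hasDerivAt_erlangOptCost (k : ℕ) (x : ℝ) :
    HasDerivAt (erlangOptCost k) (exp (-x) * expTaylor k x / k) x := by
  have h := ((hasDerivAt_exp_neg_mul_sum_expTaylor k x).div_const (k : ℝ)).const_sub 1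
  refine (h.congr_deriv (by ring)).congr_of_eventuallyEq
    (Filter.Eventually.of_forall fun y => ?_)
  simp only [erlangOptCost]
  ring

theorem erlangOptCost_zero {k : ℕ} (hk : k ≠ 0) : erlangOptCost k 0 = 0 := by
  obtain ⟨j, rfl⟩ := Nat.exists_eq_succ_of_ne_zero hk
  rw [erlangOptCost, sum_Icc_expTaylor, expTaylor, sum_range_succ']
  simp [show (j : ℝ) + 1 ≠ 0 by positivity]

theorem erlangOptCost_natCast {k : ℕ} (hk : k ≠ 0) :
    erlangOptCost k k = 1 - exp (-k) * k ^ k / k ! := by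
  obtain ⟨j, rfl⟩ := Nat.exists_eq_succ_of_ne_zero hk
  rw [erlangOptCost, sum_Icc_expTaylor, expTaylor_succ, Nat.factorial_succ,
    Nat.succ_eq_add_one]
  push_cast
  field_simp
  ring

theorem strictMonoOn_erlangOptCost {k : ℕ} (hk : k ≠ 0) :
    StrictMonoOn (erlangOptCost k) (Set.Ici 0) := by
  refine strictMonoOn_of_hasDerivWithinAt_pos (convex_Ici 0)
    (fun x _ => (hasDerivAt_erlangOptCost k x).continuousAt.continuousWithinAt)
    (fun x _ => (hasDerivAt_erlangOptCost k x).hasDerivWithinAt) fun x hx => ?_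
  rw [interior_Ici] at hx
  have := one_le_expTaylor hk (le_of_lt hx)
  have : (0 : ℝ) < k := by exact_mod_cast Nat.pos_of_ne_zero hk
  positivity

theorem concaveOn_erlangOptCost {k : ℕ} (hk : k ≠ 0) :
    ConcaveOn ℝ (Set.Ici 0) (erlangOptCost k) := by
  obtain ⟨j, rfl⟩ := Nat.exists_eq_succ_of_ne_zero hk
  refine concaveOn_of_hasDerivWithinAt2_nonpos (convex_Ici 0)
    (fun x _ => (hasDerivAt_erlangOptCost _ x).continuousAt.continuousWithinAt)
    (fun x _ => (hasDerivAt_erlangOptCost _ x).hasDerivWithinAt)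
    (fun x _ => ((hasDerivAt_exp_neg_mul_expTaylor_succ j x).div_const _).hasDerivWithinAt)
    fun x hx => ?_
  rw [interior_Ici] at hx
  have : 0 ≤ exp (-x) * (x ^ j / j !) := by have : 0 < x := hx; positivity
  rw [neg_div]
  exact neg_nonpos.2 (by positivity)

theorem min_div_one_mul_erlangOptCost_le {k : ℕ} (hk : k ≠ 0) {x : ℝ} (hx : 0 ≤ x) :
    min (x / (k : ℝ)) 1 * erlangOptCost k k ≤ erlangOptCost k x := by
  have hk₀ : (0 : ℝ) < k := by exact_mod_cast Nat.pos_of_ne_zero hk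
  rcases le_total x k with hxk | hkx
  · have ha : 0 ≤ 1 - x / k := by rw [sub_nonneg, div_le_one hk₀]; exact hxk
    have h := (concaveOn_erlangOptCost hk).2 Set.self_mem_Ici (Set.mem_Ici.2 hk₀.le)
      ha (div_nonneg hx hk₀.le) (sub_add_cancel 1 _)
    rw [min_eq_left ((div_le_one hk₀).2 hxk)]
    simpa [erlangOptCost_zero hk, hk₀.ne'] using h
  · rw [min_eq_right ((one_le_div hk₀).2 hkx), one_mul]
    exact (strictMonoOn_erlangOptCost hk).monotoneOn (Set.mem_Ici.2 hk₀.le) (Set.mem_Ici.2 hx)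
      hkx

theorem min_div_one_div_erlangOptCost_le {k : ℕ} (hk : k ≠ 0) {x : ℝ} (hx : 0 < x) :
    min (x / (k : ℝ)) 1 / erlangOptCost k x ≤ 1 / erlangOptCost k k := by
  have hk₀ : (0 : ℝ) < k := by exact_mod_cast Nat.pos_of_ne_zero hk
  have hopt : 0 < erlangOptCost k k := by
    simpa [erlangOptCost_zero hk] using
      (strictMonoOn_erlangOptCost hk) Set.self_mem_Ici (Set.mem_Ici.2 hk₀.le) hk₀
  have hmin : 0 < min (x / (k : ℝ)) 1 := lt_min (by positivity) one_pos
  have hlow := min_div_one_mul_erlangOptCost_le hk hx.le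
  rw [div_le_div_iff₀ (hlow.trans_lt' (mul_pos hmin hopt)) hopt, one_mul]
  exact hlow

/-- For Erlang(k, λ) inter-request times, the ratio of the static
baseline cost `min ((λ/k) R) 1` to the optimal offline cost
`1 - (exp (-λ R)/k) ∑_{m=1}^k ∑_{n=0}^{m-1} (λ R)^n / n!` is at most
`1/(1 - e^{-k} k^k / k!)`, attained at `λ = k/R`. -/
theorem static_baseline_ratio_erlang (k : ℕ) (hk : 1 ≤ k) (lam R : ℝ)
    (hlam : 0 < lam) (hR : 0 < R) :
    min ((lam / k) * R) 1 /
        (1 - (Real.exp (-(lam * R)) / k) *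
          ∑ m ∈ Finset.Icc 1 k, ∑ n ∈ Finset.range m, (lam * R) ^ n / n.factorial) ≤
      1 / (1 - Real.exp (-(k : ℝ)) * (k : ℝ) ^ k / k.factorial) ∧
    (lam = k / R →
      min ((lam / k) * R) 1 /
          (1 - (Real.exp (-(lam * R)) / k) *
            ∑ m ∈ Finset.Icc 1 k, ∑ n ∈ Finset.range m, (lam * R) ^ n / n.factorial) =
        1 / (1 - Real.exp (-(k : ℝ)) * (k : ℝ) ^ k / k.factorial)) := by
  have hk₀ : k ≠ 0 := Nat.one_le_iff_ne_zero.1 hk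
  have hscale : lam / k * R = lam * R / k := div_mul_eq_mul_div lam k R
  change min (lam / k * R) 1 / erlangOptCost k (lam * R) ≤ _ ∧
    (_ → min (lam / k * R) 1 / erlangOptCost k (lam * R) = _)
  rw [hscale, ← erlangOptCost_natCast hk₀]
  refine ⟨min_div_one_div_erlangOptCost_le hk₀ (mul_pos hlam hR), fun hlam_eq => ?_⟩
  have hx : lam * R = k := by rw [hlam_eq]; field_simp
  rw [hx, div_self (by exact_mod_cast hk₀), min_self]
end

section
/- For k \ge 1 an integer and \lambda, R > 0, the derivative with respect to \lambda of the ratio ((\lambda/k) R) / (1 - (e^{-\lambda R}/k) \sum_{m=1}^{k} \sum_{n=0}^{m-1} (\lambda R)^n / n!) is nonnegative; equivalently, using \sum_{n=0}^{k} (\lambda R)^n/n! \le e^{\lambda R}, the numerator of the derivative (R/k)(1 - e^{-\lambda R} \sum_{n=0}^{k} (\lambda R)^n / n!) is nonnegative. -/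
/-- For integer `k ≥ 1` and `λ, R > 0`, the numerator of the
derivative (with respect to `λ`) of the Erlang static-baseline-to-offline cost
ratio, namely `(R/k) (1 - exp (-λ R) ∑_{n=0}^{k} (λ R)^n / n!)`, is
nonnegative (using `∑_{n=0}^{k} x^n/n! ≤ e^x`); hence the derivative of the
ratio is nonnegative. -/
theorem erlang_ratio_derivative_nonneg (k : ℕ) (hk : 1 ≤ k) (lam R : ℝ)
    (hlam : 0 < lam) (hR : 0 < R) :
    0 ≤ (R / k) *
        (1 - Real.exp (-(lam * R)) *
          ∑ n ∈ Finset.range (k + 1), (lam * R) ^ n / n.factorial) := by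
  have hx : (0:ℝ) ≤ lam * R := by positivity
  have hsum : ∑ n ∈ Finset.range (k + 1), (lam * R) ^ n / n.factorial ≤ Real.exp (lam * R) :=
    Real.sum_le_exp_of_nonneg hx (k + 1)
  have h1 : Real.exp (-(lam * R)) *
      (∑ n ∈ Finset.range (k + 1), (lam * R) ^ n / n.factorial) ≤ 1 := by
    have := mul_le_mul_of_nonneg_left hsum (Real.exp_pos (-(lam * R))).le
    rwa [← Real.exp_add, neg_add_cancel, Real.exp_zero] at this
  have hRk : (0:ℝ) ≤ R / k := by positivity
  nlinarith
end

section
/- For Pareto inter-request times, the ratio of the static baseline cost min(((\alpha-1)/\alpha)(R/t_m), 1) to the optimal offline cost is unbounded: setting \alpha = 1/(1 - t_m/R) and letting t_m/R \to 0+, the ratio 1/(1 - (1-x) x^{x/(1-x)}) (with x = t_m/R) tends to infinity. -/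
/-!
With `x = t_m / R` and `α = 1 / (1 - x)` the static cost is exactly `1`, while the offline cost is
`1 - (1 - x) x ^ (x / (1 - x))`. Since `log x * x → 0`, also `x ^ (x / (1 - x)) → 1` as `x → 0+`,
so the offline cost tends to `0` from above and the ratio blows up.
-/

open Filter Real Set Topology

theorem tendsto_rpow_mul_self_mul_nhdsGT_zero {g : ℝ → ℝ} {c : ℝ}
    (hg : Tendsto g (𝓝[>] 0) (𝓝 c)) :
    Tendsto (fun x => x ^ (x * g x)) (𝓝[>] 0) (𝓝 1) := by
  have hlog : Tendsto (fun x => log x * x * g x) (𝓝[>] 0) (𝓝 0) := by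
    simpa only [rpow_one, zero_mul] using (tendsto_log_mul_rpow_nhdsGT_zero one_pos).mul hg
  refine ((continuous_exp.tendsto 0).comp hlog).congr' ?_ |>.trans (by rw [exp_zero])
  filter_upwards [self_mem_nhdsWithin] with x hx
  rw [Function.comp_apply, rpow_def_of_pos hx, mul_assoc]

theorem tendsto_rpow_div_one_sub_self_nhdsGT_zero :
    Tendsto (fun x : ℝ => x ^ (x / (1 - x))) (𝓝[>] 0) (𝓝 1) := by
  have hg : Tendsto (fun x : ℝ => (1 - x)⁻¹) (𝓝[>] 0) (𝓝 1) := by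
    have : ContinuousAt (fun x : ℝ => (1 - x)⁻¹) 0 := by fun_prop (disch := norm_num)
    simpa using this.tendsto.mono_left nhdsWithin_le_nhds
  simpa only [div_eq_mul_inv] using tendsto_rpow_mul_self_mul_nhdsGT_zero hg

theorem one_sub_mul_rpow_div_one_sub_self_pos {x : ℝ} (hx0 : 0 < x) (hx1 : x < 1) :
    0 < 1 - (1 - x) * x ^ (x / (1 - x)) := by
  have hpow : x ^ (x / (1 - x)) ≤ 1 := rpow_le_one hx0.le hx1.le (div_pos hx0 (by linarith)).le
  nlinarith [rpow_nonneg hx0.le (x / (1 - x))]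

theorem tendsto_one_sub_mul_rpow_div_one_sub_self_nhdsGT_zero :
    Tendsto (fun x : ℝ => 1 - (1 - x) * x ^ (x / (1 - x))) (𝓝[>] 0) (𝓝[>] 0) := by
  refine tendsto_nhdsWithin_iff.mpr ⟨?_, ?_⟩
  · have h1x : Tendsto (fun x : ℝ => 1 - x) (𝓝[>] 0) (𝓝 1) := by
      simpa using ((continuous_sub_left (1 : ℝ)).tendsto 0).mono_left nhdsWithin_le_nhds
    simpa using
      (tendsto_const_nhds (x := (1 : ℝ))).sub (h1x.mul tendsto_rpow_div_one_sub_self_nhdsGT_zero)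
  · filter_upwards [Ioo_mem_nhdsGT one_pos] with x hx
    exact one_sub_mul_rpow_div_one_sub_self_pos hx.1 hx.2

theorem pareto_static_offline_ratio_eq {R tm α : ℝ} (htm : 0 < tm) (hR : tm < R)
    (hα : α = 1 / (1 - tm / R)) :
    min ((α - 1) / α * (R / tm)) 1 / (1 - (1 / α) * (tm / R) ^ (α - 1)) =
      1 / (1 - (1 - tm / R) * (tm / R) ^ (tm / R / (1 - tm / R))) := by
  have hR0 : 0 < R := htm.trans hR
  rw [← inv_div tm R]
  set x := tm / R
  have hx0 : x ≠ 0 := (div_pos htm hR0).ne'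
  have hx1 : 1 - x ≠ 0 := by
    have : x < 1 := (div_lt_one hR0).mpr hR
    linarith
  have hα1 : α - 1 = x / (1 - x) := by
    rw [hα]; field_simp; ring
  have hstatic : (α - 1) / α * x⁻¹ = 1 := by
    rw [hα1, hα]; field_simp
  rw [hstatic, min_self, hα1, hα, one_div_one_div]

/-- For Pareto inter-request times the ratio of the static
baseline cost `min (((α-1)/α)(R/t_m)) 1` to the optimal offline cost
`1 - (1/α)(t_m/R)^(α-1)` is unbounded: setting `α = 1/(1 - t_m/R)` and letting
`x = t_m/R → 0+`, the ratio `1/(1 - (1-x) x^(x/(1-x)))` tends to infinity;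
consequently the static-to-offline ratio exceeds any bound `B`. -/
theorem static_baseline_pareto_unbounded :
    Filter.Tendsto (fun x : ℝ => 1 / (1 - (1 - x) * x ^ (x / (1 - x))))
      (nhdsWithin 0 (Set.Ioi 0)) Filter.atTop ∧
    ∀ B : ℝ, ∃ R tm α : ℝ, 0 < tm ∧ tm ≤ R ∧ 1 < α ∧ α = 1 / (1 - tm / R) ∧
      B < min ((α - 1) / α * (R / tm)) 1 / (1 - (1 / α) * (tm / R) ^ (α - 1)) := by
  have hlim : Tendsto (fun x : ℝ => 1 / (1 - (1 - x) * x ^ (x / (1 - x)))) (𝓝[>] 0) atTop := by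
    simpa only [one_div, Pi.inv_def] using
      tendsto_one_sub_mul_rpow_div_one_sub_self_nhdsGT_zero.inv_tendsto_nhdsGT_zero
  refine ⟨hlim, fun B => ?_⟩
  obtain ⟨x, hBx, hx0, hx1⟩ :=
    ((hlim.eventually_gt_atTop B).and (Ioo_mem_nhdsGT one_pos)).exists
  refine ⟨1, x, 1 / (1 - x), hx0, hx1.le, one_lt_one_div (by linarith) (by linarith),
    by rw [div_one], ?_⟩
  rwa [pareto_static_offline_ratio_eq hx0 hx1 (by rw [div_one]), div_one]
end
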